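/- Let Q₁ and Q₂ be defined as in the context. Then for every t with 1 < t < 2 and every x ∈ ℝ, the double integral ∫_{ℝ²} Q₁(y₁, 1 | x₁, t−1) · Q₂(x₁, x, t−1 | 0, y₁, 0) dx₁ dy₁ equals (2π·(t³+2)/3)^{−1/2} · exp(−3x²/(2(t³+2))). In other words, the paper's governing-equation formula for the density of the delayed equation reproduces, on the time interval (1,2), the Gaussian density with mean 0 and variance (t³+2)/3. -/
import Mathlib


open Real MeasureTheory

lemma gauss_sq (a b : ℝ) (ha : 0 < a) (x : ℝ) :
    -a * x ^ 2 + b * x = -a * (x - b / (2 * a)) ^ 2 + b ^ 2 / (4 * a) := by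
  field_simp
  ring

lemma integrable_gauss (a b : ℝ) (ha : 0 < a) :
    Integrable fun x : ℝ => Real.exp (-a * x ^ 2 + b * x) := by
  have h : (fun x : ℝ => Real.exp (-a * x ^ 2 + b * x))
      = fun x : ℝ => Real.exp (b ^ 2 / (4 * a)) * Real.exp (-a * (x - b / (2 * a)) ^ 2) := by
    funext x
    rw [← Real.exp_add, gauss_sq a b ha x]
    ring_nf
  rw [h]
  exact ((integrable_exp_neg_mul_sq ha).comp_sub_right (b / (2 * a))).const_mul _

lemma integral_gauss (a b : ℝ) (ha : 0 < a) :
    ∫ x : ℝ, Real.exp (-a * x ^ 2 + b * x)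
      = Real.sqrt (π / a) * Real.exp (b ^ 2 / (4 * a)) := by
  have h : (fun x : ℝ => Real.exp (-a * x ^ 2 + b * x))
      = fun x : ℝ => Real.exp (b ^ 2 / (4 * a)) * Real.exp (-a * (x - b / (2 * a)) ^ 2) := by
    funext x
    rw [← Real.exp_add, gauss_sq a b ha x]
    ring_nf
  rw [h, integral_const_mul, integral_sub_right_eq_self (fun x => Real.exp (-a * x ^ 2)),
    integral_gaussian]
  ring


/-- The Gaussian heat kernel `Q₁(x, t | y, s) = (2π(t−s))^{−1/2} exp(−(x−y)²/(2(t−s)))`. -/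
noncomputable def Q1 (x t y s : ℝ) : ℝ :=
  (Real.sqrt (2 * Real.pi * (t - s)))⁻¹ * Real.exp (-(x - y) ^ 2 / (2 * (t - s)))

/-- The explicit Gaussian transition density `Q₂(x₁, x₂, t | y₁, y₂, s)` of the SDE system
`dX₁ = dB₁`, `dX₂ = X₁ dt + dB₂`, with `Δ = t − s`. -/
noncomputable def Q2 (x₁ x₂ t y₁ y₂ s : ℝ) : ℝ :=
  (2 * Real.pi * (t - s) * Real.sqrt (((t - s) ^ 2 + 12) / 12))⁻¹ *
    Real.exp (-((2 * (t - s) ^ 2 + 6) / ((t - s) ^ 2 + 12)) *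
      ((x₁ - y₁) ^ 2 / (t - s)
        - 3 * (x₁ - y₁) * (x₂ - y₂ - y₁ * (t - s)) / ((t - s) ^ 2 + 3)
        + 3 * (x₂ - y₂ - y₁ * (t - s)) ^ 2 / ((t - s) ^ 3 + 3 * (t - s))))

set_option maxHeartbeats 2000000 in
/-- For `1 < t < 2`, the governing-equation formula
`∫∫ Q₁(y₁, 1 | x₁, t−1) Q₂(x₁, x, t−1 | 0, y₁, 0) dx₁ dy₁` yields the Gaussian density
with mean `0` and variance `(t³+2)/3`, i.e. the density of the solution of the SDDE
`dX(t) = X(t−1)dt + dB(t)`, `X ≡ 0` on `[−1,0]`, for `t ∈ (1,2)`. -/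
theorem sdde_density_on_one_two (t : ℝ) (ht1 : 1 < t) (ht2 : t < 2) (x : ℝ) :
    (∫ p : ℝ × ℝ, Q1 p.2 1 p.1 (t - 1) * Q2 p.1 x (t - 1) 0 p.2 0)
      = (Real.sqrt (2 * Real.pi * ((t ^ 3 + 2) / 3)))⁻¹ *
          Real.exp (-(3 * x ^ 2) / (2 * (t ^ 3 + 2))) := by
  have hd : (0:ℝ) < t - 1 := by linarith
  have hs : (0:ℝ) < 2 - t := by linarith
  have hd' : (t - 1) ≠ 0 := ne_of_gt hd
  have hs' : (2 - t) ≠ 0 := ne_of_gt hs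
  have h3 : ((t-1)^2 + 3 : ℝ) ≠ 0 := by positivity
  have h12 : ((t-1)^2 + 12 : ℝ) ≠ 0 := by positivity
  have h33 : ((t-1)^3 + 3*(t-1) : ℝ) ≠ 0 := by
    have : (0:ℝ) < (t-1)^3 + 3*(t-1) := by nlinarith [pow_pos hd 3]
    exact ne_of_gt this
  have hcpos : (0:ℝ) < (t-1)^3 + 12 := by positivity
  have hc' : ((t-1)^3 + 12 : ℝ) ≠ 0 := ne_of_gt hcpos
  have ht3 : (0:ℝ) < t^3 + 2 := by nlinarith
  have ht3' : (t^3 + 2 : ℝ) ≠ 0 := ne_of_gt ht3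
  obtain ⟨A, hA⟩ : ∃ A : ℝ, A = -((12 + 4*(t-1)^2 - 3*(t-1)^3) / (2*(2-t)*(t-1)*((t-1)^2+12))) := ⟨_, rfl⟩
  obtain ⟨D2, hD2⟩ : ∃ D2 : ℝ, D2 = 6*x/((t-1)^2+12) := ⟨_, rfl⟩
  obtain ⟨F, hF⟩ : ∃ F : ℝ, F = -(6*x^2/((t-1)*((t-1)^2+12))) := ⟨_, rfl⟩
  obtain ⟨a1, ha1d⟩ : ∃ a1 : ℝ, a1 = ((t-1)^3+12)/(2*(2-t)*(t-1)*((t-1)^2+12)) := ⟨_, rfl⟩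
  obtain ⟨B, hB⟩ : ∃ B : ℝ, B = ((t-1)^2+6*(t-1)+6)/((2-t)*((t-1)^2+12)) := ⟨_, rfl⟩
  obtain ⟨E2, hE2⟩ : ∃ E2 : ℝ, E2 = 12*x/((t-1)*((t-1)^2+12)) := ⟨_, rfl⟩
  obtain ⟨a2, ha2d⟩ : ∃ a2 : ℝ, a2 = 2*(t^3+2)/((t-1)*((t-1)^3+12)) := ⟨_, rfl⟩
  obtain ⟨b2, hb2⟩ : ∃ b2 : ℝ, b2 = 6*x*(t+1)/((t-1)^3+12) := ⟨_, rfl⟩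
  obtain ⟨c2, hc2⟩ : ∃ c2 : ℝ, c2 = -(6*x^2/((t-1)^3+12)) := ⟨_, rfl⟩
  obtain ⟨K, hK⟩ : ∃ K : ℝ,
      K = (Real.sqrt (2*π*(2-t)))⁻¹ * (2*π*(t-1)*Real.sqrt (((t-1)^2+12)/12))⁻¹ := ⟨_, rfl⟩
  have ha1 : 0 < a1 := by
    rw [ha1d]
    apply div_pos (by positivity)
    have h1 : (0:ℝ) < (t-1)^2+12 := by positivity
    nlinarith [mul_pos (mul_pos hs hd) h1]
  have ha2 : 0 < a2 := by
    rw [ha2d]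
    exact div_pos (by positivity) (mul_pos hd hcpos)
  have hK0 : 0 ≤ K := by
    rw [hK]
    positivity
  have comb : ∀ u v r z : ℝ, u * Real.exp v * (r * Real.exp z) = (u*r) * Real.exp (v+z) := by
    intro u v r z
    rw [Real.exp_add]
    ring
  have key : ∀ x1 y : ℝ, Q1 y 1 x1 (t-1) * Q2 x1 x (t-1) 0 y 0
      = K * Real.exp (A*x1^2 + D2*x1 + F) * Real.exp (-a1*y^2 + (B*x1+E2)*y) := by
    intro x1 y
    simp only [Q1, Q2, sub_zero, zero_mul]
    rw [show (1:ℝ) - (t-1) = 2 - t from by ring]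
    rw [comb, hK]
    conv_rhs => rw [mul_assoc, ← Real.exp_add]
    congr 2
    rw [hA, hD2, hF, ha1d, hB, hE2]
    field_simp
    ring
  have hfnn : ∀ x1 y : ℝ, 0 ≤ Q1 y 1 x1 (t-1) * Q2 x1 x (t-1) 0 y 0 := by
    intro x1 y
    rw [key]
    exact mul_nonneg (mul_nonneg hK0 (Real.exp_nonneg _)) (Real.exp_nonneg _)
  have hexp : ∀ x1 : ℝ, A*x1^2+D2*x1+F + (B*x1+E2)^2/(4*a1) = c2 + (-a2*x1^2 + b2*x1) := by
    intro x1
    rw [hA, hD2, hF, hB, hE2, ha1d, hc2, ha2d, hb2]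
    field_simp
    ring
  have inner : ∀ x1 : ℝ, (∫ y : ℝ, Q1 y 1 x1 (t-1) * Q2 x1 x (t-1) 0 y 0)
      = (K * Real.sqrt (π/a1) * Real.exp c2) * Real.exp (-a2*x1^2 + b2*x1) := by
    intro x1
    have h1 : (fun y : ℝ => Q1 y 1 x1 (t-1) * Q2 x1 x (t-1) 0 y 0)
        = fun y : ℝ => (K * Real.exp (A*x1^2+D2*x1+F)) * Real.exp (-a1*y^2 + (B*x1+E2)*y) := by
      funext y
      rw [key x1 y]
    rw [h1, integral_const_mul, integral_gauss a1 _ ha1]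
    calc K * Real.exp (A*x1^2+D2*x1+F) * (Real.sqrt (π/a1) * Real.exp ((B*x1+E2)^2/(4*a1)))
        = K * Real.sqrt (π/a1) * Real.exp (A*x1^2+D2*x1+F + (B*x1+E2)^2/(4*a1)) := by
          conv_rhs => rw [Real.exp_add]
          ring
      _ = K * Real.sqrt (π/a1) * Real.exp (c2 + (-a2*x1^2+b2*x1)) := by rw [hexp x1]
      _ = (K * Real.sqrt (π/a1) * Real.exp c2) * Real.exp (-a2*x1^2+b2*x1) := by
          conv_lhs => rw [Real.exp_add]
          ring
  have hmeas : AEStronglyMeasurable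
      (fun p : ℝ × ℝ => Q1 p.2 1 p.1 (t-1) * Q2 p.1 x (t-1) 0 p.2 0)
      ((volume : Measure ℝ).prod volume) := by
    apply Continuous.aestronglyMeasurable
    simp only [Q1, Q2]
    fun_prop
  have hint : Integrable
      (fun p : ℝ × ℝ => Q1 p.2 1 p.1 (t-1) * Q2 p.1 x (t-1) 0 p.2 0)
      ((volume : Measure ℝ).prod volume) := by
    rw [integrable_prod_iff hmeas]
    constructor
    · refine ae_of_all _ fun x1 => ?_
      have h1 : (fun y : ℝ => Q1 y 1 x1 (t-1) * Q2 x1 x (t-1) 0 y 0)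
          = fun y : ℝ => (K * Real.exp (A*x1^2+D2*x1+F)) * Real.exp (-a1*y^2 + (B*x1+E2)*y) := by
        funext y
        rw [key x1 y]
      have h2 := (integrable_gauss a1 (B*x1+E2) ha1).const_mul (K * Real.exp (A*x1^2+D2*x1+F))
      rw [← h1] at h2
      exact h2
    · have h2 : (fun x1 : ℝ => ∫ y : ℝ, ‖Q1 y 1 x1 (t-1) * Q2 x1 x (t-1) 0 y 0‖)
          = fun x1 : ℝ => (K * Real.sqrt (π/a1) * Real.exp c2) * Real.exp (-a2*x1^2 + b2*x1) := by
        funext x1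
        rw [show (fun y : ℝ => ‖Q1 y 1 x1 (t-1) * Q2 x1 x (t-1) 0 y 0‖)
            = fun y : ℝ => Q1 y 1 x1 (t-1) * Q2 x1 x (t-1) 0 y 0 from
          funext fun y => Real.norm_of_nonneg (hfnn x1 y)]
        exact inner x1
      have h3 : Integrable
          (fun x1 : ℝ => ∫ y : ℝ, ‖Q1 y 1 x1 (t-1) * Q2 x1 x (t-1) 0 y 0‖) volume := by
        rw [h2]
        exact (integrable_gauss a2 b2 ha2).const_mul _
      exact h3
  rw [Measure.volume_eq_prod, integral_prod _ hint]
  have hIII : c2 + b2^2/(4*a2) = -(3*x^2)/(2*(t^3+2)) := by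
    rw [hc2, hb2, ha2d]
    field_simp
    ring
  have hIV : K * Real.sqrt (π/a1) * Real.sqrt (π/a2)
      = (Real.sqrt (2*π*((t^3+2)/3)))⁻¹ := by
    have hL : 0 ≤ K * Real.sqrt (π/a1) * Real.sqrt (π/a2) :=
      mul_nonneg (mul_nonneg hK0 (Real.sqrt_nonneg _)) (Real.sqrt_nonneg _)
    have hR : 0 ≤ (Real.sqrt (2*π*((t^3+2)/3)))⁻¹ := by positivity
    have h2pt : (0:ℝ) ≤ 2*π*(2-t) := by nlinarith [mul_pos Real.pi_pos hs]
    have h2pt3 : (0:ℝ) ≤ 2*π*((t^3+2)/3) := by nlinarith [mul_pos Real.pi_pos ht3]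
    have hsq : (K * Real.sqrt (π/a1) * Real.sqrt (π/a2))^2
        = ((Real.sqrt (2*π*((t^3+2)/3)))⁻¹)^2 := by
      rw [hK]
      simp only [mul_pow, inv_pow]
      rw [Real.sq_sqrt (le_of_lt (div_pos Real.pi_pos ha1)),
        Real.sq_sqrt (le_of_lt (div_pos Real.pi_pos ha2)),
        Real.sq_sqrt h2pt,
        Real.sq_sqrt (by positivity : (0:ℝ) ≤ ((t-1)^2+12)/12),
        Real.sq_sqrt h2pt3, ha1d, ha2d]
      have hpi : (π:ℝ) ≠ 0 := Real.pi_ne_zero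
      field_simp
      ring
    nlinarith [hsq, hL, hR,
      sq_nonneg (K * Real.sqrt (π/a1) * Real.sqrt (π/a2)
        - (Real.sqrt (2*π*((t^3+2)/3)))⁻¹)]
  have main : (∫ x1 : ℝ, ∫ y : ℝ, Q1 y 1 x1 (t-1) * Q2 x1 x (t-1) 0 y 0)
      = (Real.sqrt (2*π*((t^3+2)/3)))⁻¹ * Real.exp (-(3*x^2)/(2*(t^3+2))) := by
    rw [show (fun x1 : ℝ => ∫ y : ℝ, Q1 y 1 x1 (t-1) * Q2 x1 x (t-1) 0 y 0)
        = fun x1 : ℝ => (K * Real.sqrt (π/a1) * Real.exp c2) * Real.exp (-a2*x1^2 + b2*x1) from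
      funext inner]
    rw [integral_const_mul, integral_gauss a2 b2 ha2]
    calc (K * Real.sqrt (π/a1) * Real.exp c2) * (Real.sqrt (π/a2) * Real.exp (b2^2/(4*a2)))
        = (K * Real.sqrt (π/a1) * Real.sqrt (π/a2)) * Real.exp (c2 + b2^2/(4*a2)) := by
          rw [Real.exp_add]; ring
      _ = (Real.sqrt (2*π*((t^3+2)/3)))⁻¹ * Real.exp (-(3*x^2)/(2*(t^3+2))) := by
          rw [hIII, hIV]
  exact main
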